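/- Let p ≥ 1 be an integer, b > 0, and let X be a random variable with P(X ∈ [0, b]) = 1 and P(X > 0) > 0. Set μ^k := E[X^k] for k = 1, …, p. Then for every y ≥ 0 one has 0 < C_p(y, b, μ^1, …, μ^p) ≤ 1, and for p = 1 one has C_1(y, b, μ^1) = 1. -/

import Mathlib

/-!
Write `N` and `D` for the numerator and denominator of the fraction squared in `Cp`. A variable
on `[0, b]` that is positive with positive probability has positive moments with
`μ^(k+1) ≤ b μ^k`, hence `μ^q ≤ b^(q-i) μ^i` for `i ≤ q` and `b^(q-i) μ^i` is nonincreasing in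
`i ≤ q`. So every summand of `N` and `D` is nonnegative, each summand of `N` is at most the
corresponding summand of `D`, and `D` has one extra (nonnegative) summand. Thus `0 < N ≤ D`,
i.e. `0 < (N / D)^2 ≤ 1`. For `p = 1` both sums are empty and `N = D = μ^1 e^y ≠ 0`.
-/

open Real Finset MeasureTheory

/-- `Cp p y b μ`, where `μ k` stands for the `k`-th moment `μ^k`. -/
noncomputable def Cp (p : ℕ) (y b : ℝ) (μ : ℕ → ℝ) : ℝ :=
  ((μ p * Real.exp y
      + ∑ j ∈ Finset.range (p - 2), y ^ j / (j.factorial : ℝ) * (b ^ (p - j - 2) * μ (j + 2) - μ p)) /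
   (μ p * Real.exp y
      + ∑ j ∈ Finset.range (p - 1), y ^ j / (j.factorial : ℝ) * (b ^ (p - j - 1) * μ (j + 1) - μ p))) ^ 2

open scoped Nat

noncomputable def CpNum (p : ℕ) (y b : ℝ) (μ : ℕ → ℝ) : ℝ :=
  μ p * Real.exp y
    + ∑ j ∈ Finset.range (p - 2), y ^ j / (j.factorial : ℝ) * (b ^ (p - j - 2) * μ (j + 2) - μ p)

noncomputable def CpDen (p : ℕ) (y b : ℝ) (μ : ℕ → ℝ) : ℝ :=
  μ p * Real.exp y
    + ∑ j ∈ Finset.range (p - 1), y ^ j / (j.factorial : ℝ) * (b ^ (p - j - 1) * μ (j + 1) - μ p)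

theorem Cp_eq_sq_div (p : ℕ) (y b : ℝ) (μ : ℕ → ℝ) :
    Cp p y b μ = (CpNum p y b μ / CpDen p y b μ) ^ 2 := rfl

theorem Cp_one {y b : ℝ} {μ : ℕ → ℝ} (hμ : μ 1 ≠ 0) : Cp 1 y b μ = 1 := by
  simp [Cp, hμ, Real.exp_ne_zero]

section MomentSequence

variable {y b : ℝ} {μ : ℕ → ℝ}

theorem pos_of_succ_le_mul (hμ : ∀ k, 0 < μ k) (hstep : ∀ k, μ (k + 1) ≤ b * μ k) : 0 < b :=
  pos_of_mul_pos_left ((hμ 1).trans_le (hstep 0)) (hμ 0).le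

theorem le_pow_mul_of_succ_le_mul (hb : 0 ≤ b) (hstep : ∀ k, μ (k + 1) ≤ b * μ k) {i q : ℕ}
    (hiq : i ≤ q) : μ q ≤ b ^ (q - i) * μ i := by
  induction q, hiq using Nat.le_induction with
  | base => simp
  | succ q hiq ih =>
    calc μ (q + 1) ≤ b * μ q := hstep q
      _ ≤ b * (b ^ (q - i) * μ i) := mul_le_mul_of_nonneg_left ih hb
      _ = b ^ (q + 1 - i) * μ i := by rw [Nat.sub_add_comm hiq, pow_succ]; ring

theorem coeff_mul_sub_nonneg (hy : 0 ≤ y) (hb : 0 ≤ b) (hstep : ∀ k, μ (k + 1) ≤ b * μ k)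
    {j n q : ℕ} (h : j + n ≤ q) : 0 ≤ y ^ j / j ! * (b ^ (q - j - n) * μ (j + n) - μ q) := by
  rw [Nat.sub_sub]
  exact mul_nonneg (by positivity) (sub_nonneg.2 (le_pow_mul_of_succ_le_mul hb hstep h))

theorem pow_mul_succ_le (hb : 0 ≤ b) (hstep : ∀ k, μ (k + 1) ≤ b * μ k) {j q : ℕ}
    (h : j + 2 ≤ q) : b ^ (q - j - 2) * μ (j + 2) ≤ b ^ (q - j - 1) * μ (j + 1) := by
  have hpow : b ^ (q - j - 1) = b ^ (q - j - 2) * b := by rw [← pow_succ]; congr 1; omega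
  rw [hpow, mul_assoc]
  exact mul_le_mul_of_nonneg_left (hstep (j + 1)) (pow_nonneg hb _)

variable (hy : 0 ≤ y) (hμ : ∀ k, 0 < μ k) (hstep : ∀ k, μ (k + 1) ≤ b * μ k)
include hy hμ hstep

theorem CpNum_pos (q : ℕ) : 0 < CpNum q y b μ := by
  have hb := (pos_of_succ_le_mul hμ hstep).le
  rw [CpNum]
  refine add_pos_of_pos_of_nonneg (by have := hμ q; positivity) (sum_nonneg fun j hj => ?_)
  exact coeff_mul_sub_nonneg hy hb hstep (by rw [mem_range] at hj; omega)

theorem CpNum_le_CpDen (q : ℕ) : CpNum q y b μ ≤ CpDen q y b μ := by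
  have hb := (pos_of_succ_le_mul hμ hstep).le
  rw [CpNum, CpDen]
  gcongr μ q * Real.exp y + ?_
  calc _ ≤ ∑ j ∈ range (q - 2), y ^ j / j ! * (b ^ (q - j - 1) * μ (j + 1) - μ q) := by
        refine sum_le_sum fun j hj => mul_le_mul_of_nonneg_left ?_ (by positivity)
        exact sub_le_sub_right (pow_mul_succ_le hb hstep (by rw [mem_range] at hj; omega)) _
    _ ≤ _ := by
        refine sum_le_sum_of_subset_of_nonneg (range_subset_range.2 (by omega)) fun j hj _ => ?_
        exact coeff_mul_sub_nonneg hy hb hstep (by rw [mem_range] at hj; omega)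

theorem Cp_pos_and_le_one (q : ℕ) : 0 < Cp q y b μ ∧ Cp q y b μ ≤ 1 := by
  have hN := CpNum_pos hy hμ hstep q
  have hND := CpNum_le_CpDen hy hμ hstep q
  have hD := hN.trans_le hND
  rw [Cp_eq_sq_div]
  exact ⟨by positivity, pow_le_one₀ (by positivity) ((div_le_one hD).2 hND)⟩

end MomentSequence

section BoundedMoments

variable {Ω : Type*} [MeasurableSpace Ω] {P : Measure Ω} {X : Ω → ℝ} {b : ℝ}

theorem integrable_pow_of_ae_mem_Icc [IsFiniteMeasure P] (hX : AEStronglyMeasurable X P)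
    (hXb : ∀ᵐ ω ∂P, X ω ∈ Set.Icc 0 b) (k : ℕ) : Integrable (fun ω => X ω ^ k) P := by
  refine Integrable.of_bound (hX.pow k) (b ^ k) ?_
  filter_upwards [hXb] with ω hω
  rw [Real.norm_eq_abs, abs_of_nonneg (pow_nonneg hω.1 k)]
  exact pow_le_pow_left₀ hω.1 hω.2 k

theorem integral_pow_succ_le_mul [IsFiniteMeasure P] (hX : AEStronglyMeasurable X P)
    (hXb : ∀ᵐ ω ∂P, X ω ∈ Set.Icc 0 b) (k : ℕ) :
    ∫ ω, X ω ^ (k + 1) ∂P ≤ b * ∫ ω, X ω ^ k ∂P := by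
  have hint := integrable_pow_of_ae_mem_Icc hX hXb
  rw [← integral_const_mul]
  refine integral_mono_ae (hint (k + 1)) ((hint k).const_mul b) ?_
  filter_upwards [hXb] with ω hω
  rw [pow_succ']
  exact mul_le_mul_of_nonneg_right hω.2 (pow_nonneg hω.1 k)

theorem integral_pow_pos [IsFiniteMeasure P] (hX : AEStronglyMeasurable X P)
    (hXb : ∀ᵐ ω ∂P, X ω ∈ Set.Icc 0 b) (hXpos : 0 < P {ω | 0 < X ω}) (k : ℕ) :
    0 < ∫ ω, X ω ^ k ∂P := by
  have hnonneg : 0 ≤ᵐ[P] fun ω => X ω ^ k := by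
    filter_upwards [hXb] with ω hω
    exact pow_nonneg hω.1 k
  rw [integral_pos_iff_support_of_nonneg_ae hnonneg (integrable_pow_of_ae_mem_Icc hX hXb k)]
  exact hXpos.trans_le (measure_mono fun ω hω => pow_ne_zero k hω.ne')

end BoundedMoments

theorem statement6_general {Ω : Type*} [MeasurableSpace Ω] (P : Measure Ω) [IsProbabilityMeasure P]
    (p : ℕ) (b : ℝ)
    (X : Ω → ℝ) (hX : Measurable X)
    (hXb : P {ω | X ω ∈ Set.Icc 0 b} = 1)
    (hXpos : 0 < P {ω | 0 < X ω})
    (y : ℝ) (hy : 0 ≤ y) :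
    0 < Cp p y b (fun k => ∫ ω, (X ω) ^ k ∂P) ∧
      Cp p y b (fun k => ∫ ω, (X ω) ^ k ∂P) ≤ 1 ∧
      Cp 1 y b (fun k => ∫ ω, (X ω) ^ k ∂P) = 1 := by
  have hae : ∀ᵐ ω ∂P, X ω ∈ Set.Icc 0 b := by
    rwa [ae_iff_measure_eq (hX measurableSet_Icc).nullMeasurableSet, measure_univ]
  have hpos := integral_pow_pos hX.aestronglyMeasurable hae hXpos
  have hstep := integral_pow_succ_le_mul hX.aestronglyMeasurable hae
  obtain ⟨hCp_pos, hCp_le_one⟩ := Cp_pos_and_le_one hy hpos hstep p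
  exact ⟨hCp_pos, hCp_le_one, Cp_one (hpos 1).ne'⟩

theorem statement6 {Ω : Type*} [MeasurableSpace Ω] (P : Measure Ω) [IsProbabilityMeasure P]
    (p : ℕ) (hp : 1 ≤ p) (b : ℝ) (hb : 0 < b)
    (X : Ω → ℝ) (hX : Measurable X)
    (hXb : P {ω | X ω ∈ Set.Icc 0 b} = 1)
    (hXpos : 0 < P {ω | 0 < X ω})
    (y : ℝ) (hy : 0 ≤ y) :
    0 < Cp p y b (fun k => ∫ ω, (X ω) ^ k ∂P) ∧
      Cp p y b (fun k => ∫ ω, (X ω) ^ k ∂P) ≤ 1 ∧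
      Cp 1 y b (fun k => ∫ ω, (X ω) ^ k ∂P) = 1 :=
  statement6_general P p b X hX hXb hXpos y hy
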